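/- arXiv:2410.05924 — 3 statements merged into one kernel-verified Lean document; each statement's English description precedes it below -/
import Mathlib

section
/- In any left brace (A, +, ∘) with a*b := a∘b - a - b, for every a, b ∈ A and every natural number j, we have a^{∘j} = Σ_{i=1}^{j} C(j,i) e_i(a), where e_1(a) = a and e_{i+1}(a) = a * e_i(a). -/
universe u

class LeftBrace (A : Type u) extends AddCommGroup A where
  circ : A → A → A
  circ_assoc : ∀ a b c : A, circ (circ a b) c = circ a (circ b c)
  zero_circ : ∀ a : A, circ 0 a = a
  circ_zero : ∀ a : A, circ a 0 = a
  cinv : A → A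
  cinv_circ : ∀ a : A, circ (cinv a) a = 0
  circ_add : ∀ a b c : A, circ a (b + c) + a = circ a b + circ a c

namespace LeftBrace

variable {A : Type u} [LeftBrace A]

/-- `a * b = a∘b - a - b`. -/
def star (a b : A) : A := circ a b - a - b

/-- `cpow a j` is the `j`-th power of `a` in the group `(A, ∘)` (whose identity is `0`). -/
def cpow (a : A) : ℕ → A
  | 0 => 0
  | n+1 => circ a (cpow a n)

/-- `eFun a i = e_{i+1}(a)`: `eFun a 0 = a`, `eFun a (i+1) = a * eFun a i`. -/
def eFun (a : A) : ℕ → A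
  | 0 => a
  | i+1 => star a (eFun a i)

/-- `eStar a b i = e_{i+1}'(a,b)`: `eStar a b 0 = a*b`, `eStar a b (i+1) = a * eStar a b i`. -/
def eStar (a b : A) : ℕ → A
  | 0 => star a b
  | i+1 => star a (eStar a b i)

/-- `nSet A m = mA = {m a : a ∈ A}`. -/
def nSet (A : Type u) [LeftBrace A] (m : ℕ) : Set A := {x | ∃ a : A, m • a = x}

/-- `annSet A m = ann(m) = {a ∈ A : m a = 0}`. -/
def annSet (A : Type u) [LeftBrace A] (m : ℕ) : Set A := {a : A | m • a = 0}

/-- An ideal of a brace: an additive subgroup closed under `i*a` and `a*i`. -/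
def IsBraceIdeal (I : Set A) : Prop :=
  0 ∈ I ∧ (∀ x ∈ I, ∀ y ∈ I, x + y ∈ I) ∧ (∀ x ∈ I, -x ∈ I) ∧
    ∀ x ∈ I, ∀ a : A, star x a ∈ I ∧ star a x ∈ I

/-- Property 1': `e'_{⌊(p-1)/4⌋}(a,b) ∈ pA` for all `a, b`. -/
def Prop1' (A : Type u) [LeftBrace A] (p : ℕ) : Prop :=
  ∀ a b : A, eStar a b ((p-1)/4 - 1) ∈ nSet A p

/-- Property 1'': `e'_{⌊(p-1)/4⌋}(a, ann(p^i)) ⊆ ann(p^{i-1})` for all `i ≥ 1`. -/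
def Prop1'' (A : Type u) [LeftBrace A] (p : ℕ) : Prop :=
  ∀ i : ℕ, 1 ≤ i → ∀ a x : A, (p^i) • x = 0 →
    (p^(i-1)) • eStar a x ((p-1)/4 - 1) = 0

end LeftBrace

open LeftBrace in
/-- The map `x ↦ a∘x - a` as an additive group homomorphism. -/
def lamHom {A : Type u} [LeftBrace A] (a : A) : A →+ A where
  toFun x := circ a x - a
  map_zero' := by simp [circ_zero]
  map_add' b c := by
    have h := circ_add a b c
    rw [sub_add_sub_comm, ← h]
    abel

open LeftBrace in
/-- `a^{∘j} = Σ_{i=1}^{j} C(j,i) e_i(a)`. -/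
theorem statement0 {A : Type u} [LeftBrace A] (a b : A) (j : ℕ) :
    cpow a j = ∑ i ∈ Finset.range j, (j.choose (i + 1)) • eFun a i := by
  induction j with
  | zero => simp [cpow]
  | succ j ih =>
    have hL : ∀ x : A, circ a x = a + lamHom a x := by
      intro x; simp [lamHom]
    have hLe : ∀ i, lamHom a (eFun a i) = eFun a i + eFun a (i + 1) := by
      intro i
      show circ a (eFun a i) - a = eFun a i + eFun a (i + 1)
      show _ = eFun a i + star a (eFun a i)
      simp [LeftBrace.star]
    have key : ∑ i ∈ Finset.range (j + 1), ((j + 1).choose (i + 1)) • eFun a i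
        = a + ∑ i ∈ Finset.range j,
            (j.choose (i + 1)) • (eFun a i + eFun a (i + 1)) := by
      have h1 : ∀ i, ((j + 1).choose (i + 1)) • eFun a i
          = (j.choose (i + 1)) • eFun a i + (j.choose i) • eFun a i := by
        intro i
        rw [Nat.choose_succ_succ, add_smul, add_comm]
      simp_rw [h1, Finset.sum_add_distrib, smul_add]
      rw [Finset.sum_range_succ (fun i => (j.choose (i + 1)) • eFun a i),
          Nat.choose_succ_self, zero_smul, add_zero,
          Finset.sum_range_succ' (fun i => (j.choose i) • eFun a i)]
      simp [eFun]
      rw [Finset.sum_add_distrib]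
      abel
    calc cpow a (j + 1) = circ a (cpow a j) := rfl
      _ = a + lamHom a (∑ i ∈ Finset.range j, (j.choose (i + 1)) • eFun a i) := by
          rw [hL, ih]
      _ = a + ∑ i ∈ Finset.range j, (j.choose (i + 1)) • (eFun a i + eFun a (i + 1)) := by
          rw [map_sum]
          simp [hLe]
      _ = ∑ i ∈ Finset.range (j + 1), ((j + 1).choose (i + 1)) • eFun a i := key.symm
end

section
/- In any left brace (A, +, ∘) with a*b := a∘b - a - b, for every a, b ∈ A and every natural number j, we have a^{∘j} * b = Σ_{i=1}^{j} C(j,i) e_i'(a,b), where e_1'(a,b) = a*b and e_{i+1}'(a,b) = a * e_i'(a,b). -/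
universe u

namespace LeftBrace

variable {A : Type u} [LeftBrace A]

lemma circ_add' (a b c : A) : circ a (b + c) = circ a b + circ a c - a := by
  have := circ_add a b c; linear_combination (norm := abel) this

lemma circ_sub' (a b c : A) : circ a (b - c) = circ a b - circ a c + a := by
  have := circ_add' a (b - c) c
  rw [sub_add_cancel] at this
  rw [this]; abel

lemma star_add_right (a x y : A) : star a (x + y) = star a x + star a y := by
  unfold star; rw [circ_add']; abel

lemma star_zero_right (a : A) : star a 0 = 0 := by
  unfold star; rw [circ_zero]; abel

/-- `star a ·` as an additive monoid hom. -/
def starHom (a : A) : A →+ A where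
  toFun := star a
  map_zero' := star_zero_right a
  map_add' := star_add_right a

lemma star_circ_left (a c b : A) :
    star (circ a c) b = star a (star c b) + star c b + star a b := by
  unfold star
  rw [circ_assoc, show circ c b - c - b = circ c b - c - b from rfl,
    circ_sub', circ_sub']
  abel

end LeftBrace

open LeftBrace in
/-- `a^{∘j} * b = Σ_{i=1}^{j} C(j,i) e_i'(a,b)`. -/
theorem statement1 {A : Type u} [LeftBrace A] (a b : A) (j : ℕ) :
    star (cpow a j) b = ∑ i ∈ Finset.range j, (j.choose (i + 1)) • eStar a b i := by
  induction j with
  | zero =>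
      simp [cpow, LeftBrace.star, zero_circ]
  | succ j ih =>
      have h1 : star (cpow a (j + 1)) b
          = star a (star (cpow a j) b) + star (cpow a j) b + star a b := by
        rw [show cpow a (j + 1) = circ a (cpow a j) from rfl, star_circ_left]
      rw [h1, ih]
      have h2 : star a (∑ i ∈ Finset.range j, (j.choose (i + 1)) • eStar a b i)
          = ∑ i ∈ Finset.range j, (j.choose (i + 1)) • eStar a b (i + 1) := by
        rw [show star a (∑ i ∈ Finset.range j, (j.choose (i + 1)) • eStar a b i)
            = starHom a (∑ i ∈ Finset.range j, (j.choose (i + 1)) • eStar a b i) from rfl,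
          map_sum]
        refine Finset.sum_congr rfl fun i _ => ?_
        rw [map_nsmul]
        rfl
      rw [h2]
      have h3 : ∀ i, ((j + 1).choose (i + 1)) • eStar a b i
          = (j.choose i) • eStar a b i + (j.choose (i + 1)) • eStar a b i := by
        intro i
        rw [Nat.choose_succ_succ, add_smul]
      calc ∑ i ∈ Finset.range j, (j.choose (i + 1)) • eStar a b (i + 1)
            + ∑ i ∈ Finset.range j, (j.choose (i + 1)) • eStar a b i + star a b
          = (∑ i ∈ Finset.range (j + 1), (j.choose i) • eStar a b i)
            + ∑ i ∈ Finset.range (j + 1), (j.choose (i + 1)) • eStar a b i := by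
            rw [Finset.sum_range_succ' (fun i => (j.choose i) • eStar a b i),
              Finset.sum_range_succ (fun i => (j.choose (i + 1)) • eStar a b i)]
            simp only [Nat.choose_zero_right, one_smul, Nat.choose_succ_self, zero_smul,
              add_zero]
            simp only [eStar]
            abel
        _ = ∑ i ∈ Finset.range (j + 1), ((j + 1).choose (i + 1)) • eStar a b i := by
            rw [← Finset.sum_add_distrib]
            exact Finset.sum_congr rfl fun i _ => (h3 i).symm
end

section
/- Let A be a left brace whose additive group is a direct sum of cyclic groups, all of order p^α. If A satisfies Property 1' (e_{⌊(p−1)/4⌋}'(a,b) ∈ pA for all a, b ∈ A), then A satisfies Property 1'': e_{⌊(p−1)/4⌋}'(a, x) ∈ ann(p^{i−1}) for all a ∈ A, x ∈ ann(p^i), i ≥ 1. -/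
universe u

namespace LeftBraceAux
open LeftBrace

variable {A : Type u} [LeftBrace A]

lemma star_add (a x y : A) : star a (x + y) = star a x + star a y := by
  have h := LeftBrace.circ_add a x y
  unfold LeftBrace.star
  have : circ a (x + y) = circ a x + circ a y - a := by
    rw [← h]; abel
  rw [this]; abel

lemma star_zero (a : A) : star a (0 : A) = 0 := by
  unfold LeftBrace.star; rw [LeftBrace.circ_zero]; abel

lemma star_nsmul (a : A) (n : ℕ) (x : A) : star a (n • x) = n • star a x := by
  induction n with
  | zero => simp [star_zero]
  | succ k ih => rw [succ_nsmul, succ_nsmul, star_add, ih]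

lemma eStar_nsmul (a : A) (n : ℕ) (x : A) (i : ℕ) :
    eStar a (n • x) i = n • eStar a x i := by
  induction i with
  | zero => simpa [eStar] using star_nsmul a n x
  | succ k ih => simp only [eStar, ih, star_nsmul]

lemma zmod_ann {p α i : ℕ} (hp : p.Prime) (hi : i ≤ α) (z : ZMod (p ^ α))
    (hz : (p ^ i) • z = 0) : ∃ w : ZMod (p ^ α), (p ^ (α - i)) • w = z := by
  haveI : NeZero (p ^ α) := ⟨pow_ne_zero _ hp.ne_zero⟩
  have hz' : ((p ^ i * z.val : ℕ) : ZMod (p ^ α)) = 0 := by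
    push_cast
    rw [ZMod.natCast_val, ZMod.cast_id]
    simpa [nsmul_eq_mul] using hz
  rw [ZMod.natCast_eq_zero_iff] at hz'
  have hdvd : p ^ (α - i) ∣ z.val := by
    have h1 : p ^ i * p ^ (α - i) ∣ p ^ i * z.val := by
      rwa [← pow_add, Nat.add_sub_cancel' hi]
    exact (mul_dvd_mul_iff_left (pow_ne_zero i hp.ne_zero)).mp h1
  obtain ⟨w, hw⟩ := hdvd
  refine ⟨(w : ZMod (p ^ α)), ?_⟩
  have : ((p ^ (α - i) * w : ℕ) : ZMod (p ^ α)) = z := by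
    rw [← hw, ZMod.natCast_val, ZMod.cast_id]
  simpa [nsmul_eq_mul] using this

end LeftBraceAux


open LeftBrace in
/-- if the additive group of `A` is a direct sum of cyclic groups all of
order `p^α` and `A` satisfies Property 1', then `A` satisfies Property 1''. -/
theorem statement19 {A : Type u} [LeftBrace A] (p : ℕ) (hp : p.Prime) (α β : ℕ)
    (hiso : Nonempty (A ≃+ (Fin β → ZMod (p ^ α))))
    (h1 : Prop1' A p) :
    Prop1'' A p := by
  obtain ⟨f⟩ := hiso
  intro i hi a x hx
  set m := (p - 1) / 4 - 1 with hm
  -- every element is killed by p ^ α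
  have hord : ∀ y : A, (p ^ α) • y = 0 := by
    intro y
    apply f.injective
    rw [map_nsmul, map_zero]
    funext j
    simp only [Pi.smul_apply, Pi.zero_apply, nsmul_eq_mul]
    rw [ZMod.natCast_self, zero_mul]
  by_cases hle : i ≤ α
  · -- x ∈ ann(p^i) ⇒ x = p^{α-i} • y
    have hkey : ∃ y : A, (p ^ (α - i)) • y = x := by
      have hzx : ∀ j, (p ^ i) • (f x j) = 0 := by
        intro j
        have := congrArg (fun z => f z j) hx
        simpa [map_nsmul] using this
      choose w hw using fun j => LeftBraceAux.zmod_ann hp hle (f x j) (hzx j)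
      refine ⟨f.symm w, ?_⟩
      apply f.injective
      rw [map_nsmul, f.apply_symm_apply]
      funext j
      exact hw j
    obtain ⟨y, hy⟩ := hkey
    obtain ⟨z, hz⟩ := h1 a y
    calc (p ^ (i - 1)) • eStar a x m
        = (p ^ (i - 1)) • eStar a ((p ^ (α - i)) • y) m := by rw [hy]
      _ = (p ^ (i - 1)) • (p ^ (α - i)) • eStar a y m := by
            rw [LeftBraceAux.eStar_nsmul]
      _ = (p ^ (i - 1)) • (p ^ (α - i)) • p • z := by rw [hz]
      _ = (p ^ (i - 1) * (p ^ (α - i) * p)) • z := by rw [smul_smul, smul_smul, mul_assoc]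
      _ = (p ^ α) • z := by
            congr 1
            rw [← pow_succ, ← pow_add]
            congr 1
            omega
      _ = 0 := hord z
  · have hα : α ≤ i - 1 := by omega
    have : p ^ (i - 1) = p ^ (i - 1 - α) * p ^ α := by
      rw [← pow_add]; congr 1; omega
    rw [this, mul_comm, mul_smul, hord]
end
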